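/- arXiv:1810.01610 — 5 statements merged into one kernel-verified Lean document; each statement's English description precedes it below -/
import Mathlib

section
/- Let L be a lattice with a least element, let a ∈ L be an atom of L that is also a neutral element of L, and let x ∈ L. Then x is a cancellable element of L if and only if x ⊔ a is a cancellable element of L. -/
/-- An element `x` of a lattice is cancellable if `x ⊔ y = x ⊔ z` and `x ⊓ y = x ⊓ z`
imply `y = z`. -/
def IsCancellable {L : Type*} [Lattice L] (x : L) : Prop :=
  ∀ y z : L, x ⊔ y = x ⊔ z → x ⊓ y = x ⊓ z → y = z

/-- An element `a` of a lattice is neutral. -/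
def IsNeutral {L : Type*} [Lattice L] (a : L) : Prop :=
  ∀ y z : L, (a ⊔ y) ⊓ (y ⊔ z) ⊓ (z ⊔ a) = (a ⊓ y) ⊔ (y ⊓ z) ⊔ (z ⊓ a)

/-!
If `a ≤ x` there is nothing to prove, so let `a` be disjoint from `x`. The median identity
defining neutrality collapses on elements disjoint from `a`, and for an atom `a` this gives
`(x ⊔ a) ⊓ y = (a ⊓ y) ⊔ (x ⊓ y)` and `a ⊓ (x ⊔ y) = a ⊓ y`, and shows that `a` itself is
cancellable. Thus a pair `y, z` has the same join and meet with `x ⊔ a` exactly when it has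
the same join and meet with `x` and `a ⊓ y = a ⊓ z`, and the latter is forced either way.
-/

section Cancellable

variable {L : Type*} [Lattice L] {a x : L}

theorem IsCancellable.sup_of_inf_sup_eq (hx : IsCancellable x) (ha : IsCancellable a)
    (hdist : ∀ y, a ⊓ (x ⊔ y) = a ⊓ y) : IsCancellable (x ⊔ a) := by
  intro y z hsup hinf
  have hinf_of_le {b : L} (hb : b ≤ x ⊔ a) : b ⊓ y = b ⊓ z := by
    rw [← inf_eq_left.mpr hb, inf_assoc, inf_assoc, hinf]
  have hax : a ⊓ y = a ⊓ z := hinf_of_le le_sup_right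
  refine hx y z (ha _ _ ?_ ?_) (hinf_of_le le_sup_left)
  · rw [← sup_assoc, sup_comm a x, hsup, sup_assoc, sup_left_comm]
  · rw [hdist, hdist, hax]

theorem IsCancellable.of_sup (h : IsCancellable (x ⊔ a))
    (hdist : ∀ y, a ⊓ (x ⊔ y) = a ⊓ y) (hmeet : ∀ y, (x ⊔ a) ⊓ y = (a ⊓ y) ⊔ (x ⊓ y)) :
    IsCancellable x := by
  intro y z hsup hinf
  have hax : a ⊓ y = a ⊓ z := by rw [← hdist, hsup, hdist]
  refine h y z ?_ ?_
  · rw [sup_right_comm, hsup, sup_right_comm]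
  · rw [hmeet, hmeet, hax, hinf]

end Cancellable

namespace IsNeutral

variable {L : Type*} [Lattice L] [OrderBot L] {a u v : L}

theorem median_eq_of_disjoint (ha : IsNeutral a) (hu : Disjoint a u) (v : L) :
    (a ⊔ u) ⊓ (u ⊔ v) ⊓ (v ⊔ a) = (u ⊓ v) ⊔ (v ⊓ a) := by
  rw [ha u v, hu.eq_bot, bot_sup_eq]

theorem sup_inf_eq_of_disjoint (ha : IsNeutral a) (hu : Disjoint a u) (v : L) :
    (a ⊔ u) ⊓ v = (a ⊓ v) ⊔ (u ⊓ v) := by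
  apply le_antisymm
  · calc (a ⊔ u) ⊓ v ≤ (a ⊔ u) ⊓ (u ⊔ v) ⊓ (v ⊔ a) :=
          le_inf (inf_le_inf_left _ le_sup_right) (inf_le_right.trans le_sup_left)
      _ = (a ⊓ v) ⊔ (u ⊓ v) := by rw [ha.median_eq_of_disjoint hu, sup_comm, inf_comm v]
  · exact sup_le (inf_le_inf_right _ le_sup_left) (inf_le_inf_right _ le_sup_right)

theorem disjoint_sup_right (ha : IsNeutral a) (hu : Disjoint a u) (hv : Disjoint a v) :
    Disjoint a (u ⊔ v) := by
  have hmedian : a ⊓ (u ⊔ v) ≤ u ⊓ v :=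
    calc a ⊓ (u ⊔ v) ≤ (a ⊔ u) ⊓ (u ⊔ v) ⊓ (v ⊔ a) :=
          le_inf (inf_le_inf_right _ le_sup_left) (inf_le_left.trans le_sup_right)
      _ = u ⊓ v := by rw [ha.median_eq_of_disjoint hu, inf_comm v, hv.eq_bot, sup_bot_eq]
  rw [disjoint_iff, ← le_bot_iff, ← hu.eq_bot]
  exact le_inf inf_le_left (hmedian.trans inf_le_left)

theorem le_of_sup_eq_of_disjoint (ha : IsNeutral a) (hu : Disjoint a u) (hv : Disjoint a v)
    (h : a ⊔ u = a ⊔ v) : u ≤ v :=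
  calc u = (a ⊔ v) ⊓ u := by rw [← h, inf_eq_right.mpr le_sup_right]
    _ = v ⊓ u := by rw [ha.sup_inf_eq_of_disjoint hv, hu.eq_bot, bot_sup_eq]
    _ ≤ v := inf_le_left

theorem inf_sup_eq_of_disjoint (ha : IsNeutral a) (hat : IsAtom a) (hu : Disjoint a u)
    (v : L) : a ⊓ (u ⊔ v) = a ⊓ v := by
  by_cases hv : a ≤ v
  · rw [inf_eq_left.mpr hv, inf_eq_left.mpr (hv.trans le_sup_right)]
  · have hv := hat.not_le_iff_disjoint.mp hv
    rw [(ha.disjoint_sup_right hu hv).eq_bot, hv.eq_bot]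

theorem isCancellable (ha : IsNeutral a) (hat : IsAtom a) : IsCancellable a := by
  intro u v hsup hinf
  by_cases hv : a ≤ v
  · have hu : a ≤ u := by rw [← inf_eq_left, hinf, inf_eq_left.mpr hv]
    rw [← sup_eq_right.mpr hu, hsup, sup_eq_right.mpr hv]
  · have hv := hat.not_le_iff_disjoint.mp hv
    have hu : Disjoint a u := by rw [disjoint_iff, hinf, ← disjoint_iff]; exact hv
    exact le_antisymm (ha.le_of_sup_eq_of_disjoint hu hv hsup)
      (ha.le_of_sup_eq_of_disjoint hv hu hsup.symm)

end IsNeutral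

theorem stmt0 {L : Type*} [Lattice L] [OrderBot L] (a x : L)
    (ha_atom : IsAtom a) (ha_neutral : IsNeutral a) :
    IsCancellable x ↔ IsCancellable (x ⊔ a) := by
  by_cases hax : a ≤ x
  · rw [sup_eq_left.mpr hax]
  have hx := ha_atom.not_le_iff_disjoint.mp hax
  have hdist := ha_neutral.inf_sup_eq_of_disjoint ha_atom hx
  have hmeet (y : L) : (x ⊔ a) ⊓ y = (a ⊓ y) ⊔ (x ⊓ y) := by
    rw [sup_comm, ha_neutral.sup_inf_eq_of_disjoint hx]
  exact ⟨fun h ↦ h.sup_of_inf_sup_eq (ha_neutral.isCancellable ha_atom) hdist,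
    fun h ↦ h.of_sup hdist hmeet⟩
end

section
/- Let n be a natural number and let G be a subgroup of the symmetric group S_n of all permutations of an n-element set. Then G is a cancellable element of the lattice of all subgroups of S_n (ordered by inclusion, with meet the intersection and join the subgroup generated by the union) if and only if G is either the trivial subgroup or the whole group S_n. -/
open Equiv Equiv.Perm Subgroup

theorem isCancellable_bot {L : Type*} [Lattice L] [OrderBot L] : IsCancellable (⊥ : L) := by
  intro y z hsup _
  simpa using hsup

theorem isCancellable_top {L : Type*} [Lattice L] [OrderTop L] : IsCancellable (⊤ : L) := by
  intro y z _ hinf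
  simpa using hinf

section Group

variable {M : Type*} [Group M]

theorem mem_zpowers_iff_of_orderOf_eq_two {x y : M} (hx : orderOf x = 2) :
    y ∈ zpowers x ↔ y = 1 ∨ y = x := by
  classical
  rw [(orderOf_pos_iff.mp (by omega)).mem_zpowers_iff_mem_range_orderOf, hx]
  simp [Finset.range_add_one, eq_comm, or_comm]

theorem Subgroup.inf_zpowers_eq_bot_of_orderOf_eq_two {G : Subgroup M} {x : M}
    (hx : orderOf x = 2) (hxG : x ∉ G) : G ⊓ zpowers x = ⊥ := by
  refine eq_bot_iff.mpr fun y ⟨hyG, hyx⟩ => ?_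
  rcases (mem_zpowers_iff_of_orderOf_eq_two hx).mp hyx with rfl | rfl
  · exact one_mem _
  · exact absurd hyG hxG

theorem Subgroup.sup_zpowers_conj_le {G : Subgroup M} {g : M} (hg : g ∈ G) (x : M) :
    G ⊔ zpowers (g * x * g⁻¹) ≤ G ⊔ zpowers x := by
  have hg' : g ∈ G ⊔ zpowers x := mem_sup_left hg
  refine sup_le le_sup_left (zpowers_le.mpr ?_)
  exact mul_mem (mul_mem hg' (mem_sup_right (mem_zpowers x))) (inv_mem hg')

theorem Subgroup.sup_zpowers_conj {G : Subgroup M} {g : M} (hg : g ∈ G) (x : M) :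
    G ⊔ zpowers (g * x * g⁻¹) = G ⊔ zpowers x := by
  refine le_antisymm (sup_zpowers_conj_le hg x) ?_
  simpa [mul_assoc] using sup_zpowers_conj_le (inv_mem hg) (g * x * g⁻¹)

theorem not_isCancellable_of_conj_ne {G : Subgroup M} {g x : M} (hg : g ∈ G) (hxG : x ∉ G)
    (hx : orderOf x = 2) (hconj : g * x * g⁻¹ ≠ x) : ¬IsCancellable G := by
  have hx' : orderOf (g * x * g⁻¹) = 2 := by rw [← (SemiconjBy.conj_mk g x).orderOf_eq, hx]
  have hxG' : g * x * g⁻¹ ∉ G := by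
    rwa [mul_mem_cancel_right (inv_mem hg), mul_mem_cancel_left hg]
  intro hc
  have hzpowers := hc _ _ (sup_zpowers_conj hg x).symm
    (by rw [inf_zpowers_eq_bot_of_orderOf_eq_two hx hxG,
      inf_zpowers_eq_bot_of_orderOf_eq_two hx' hxG'])
  have hmem : g * x * g⁻¹ ∈ zpowers x := hzpowers ▸ mem_zpowers _
  rcases (mem_zpowers_iff_of_orderOf_eq_two hx).mp hmem with h1 | hx1
  · simp [h1] at hx'
  · exact hconj hx1

theorem Subgroup.eq_bot_or_eq_top_of_card_le_two [Finite M] (hM : Nat.card M ≤ 2)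
    (G : Subgroup M) : G = ⊥ ∨ G = ⊤ := by
  have hpos : 0 < Nat.card M := Nat.card_pos
  interval_cases h : Nat.card M
  · exact Or.inl (eq_bot_of_card_eq G (Nat.eq_one_of_dvd_one (h ▸ G.card_subgroup_dvd_card)))
  · have : Fact (Nat.card M).Prime := ⟨h ▸ Nat.prime_two⟩
    exact G.eq_bot_or_eq_top_of_prime_card

end Group

section Perm

variable {α : Type*} [DecidableEq α] {G : Subgroup (Perm α)}

theorem ne_of_swap_notMem {a b : α} (h : swap a b ∉ G) : a ≠ b := by
  rintro rfl
  exact h (by rw [swap_self]; exact one_mem G)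

theorem swap_mem_of_apply_ne
    (hG : ∀ a b, swap a b ∉ G → ∀ g ∈ G, g * swap a b * g⁻¹ = swap a b)
    {g : Perm α} (hg : g ∈ G) {x y : α} (hx : g x ≠ x) (hy : g x ≠ y) : swap x y ∈ G := by
  by_contra hxy
  have h := congrArg (· (g x)) (hG x y hxy g hg)
  simp only [← swap_apply_apply, swap_apply_left, swap_apply_of_ne_of_ne hx hy] at h
  exact ne_of_swap_notMem hxy (g.injective h).symm

theorem eq_top_of_forall_swap_notMem_conj_eq [Finite α] (h3 : ∀ x y : α, ∃ z, z ≠ x ∧ z ≠ y)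
    (hbot : G ≠ ⊥) (hG : ∀ a b, swap a b ∉ G → ∀ g ∈ G, g * swap a b * g⁻¹ = swap a b) :
    G = ⊤ := by
  obtain ⟨g, hg, hg1⟩ := G.bot_or_exists_ne_one.resolve_left hbot
  obtain ⟨i, hi⟩ : ∃ i, g i ≠ i := not_forall.mp fun h => hg1 (Equiv.ext h)
  have swap_mem_of_ne_apply {l : α} (hl : g i ≠ l) : swap i l ∈ G :=
    swap_mem_of_apply_ne hG hg hi hl
  have swap_left_mem (l : α) : swap i l ∈ G := by
    obtain ⟨k, hki, hkj⟩ := h3 i (g i)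
    have hk : swap i k ∈ G := swap_mem_of_ne_apply hkj.symm
    rcases eq_or_ne l (g i) with rfl | hl
    · exact swap_mem_of_apply_ne hG hk (by simpa using hki) (by simpa using hkj)
    · exact swap_mem_of_ne_apply hl.symm
  have swap_mem (a b : α) : swap a b ∈ G := by
    rcases eq_or_ne a i with rfl | hai
    · exact swap_left_mem b
    rcases eq_or_ne b i with rfl | hbi
    · exact swap_comm a b ▸ swap_left_mem a
    exact swap_mem_of_apply_ne hG (swap_left_mem a) (by simpa using hai.symm)
      (by simpa using hbi.symm)
  rw [eq_top_iff, ← closure_isSwap, closure_le]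
  rintro _ ⟨a, b, -, rfl⟩
  exact swap_mem a b

end Perm

theorem stmt2 (n : ℕ) (G : Subgroup (Equiv.Perm (Fin n))) :
    IsCancellable G ↔ G = ⊥ ∨ G = ⊤ := by
  refine ⟨fun hc => or_iff_not_imp_left.mpr fun hbot => ?_, ?_⟩
  · rcases le_or_gt n 2 with hn | hn
    · have hcard : Nat.card (Perm (Fin n)) ≤ 2 := by
        simpa [Fintype.card_perm] using Nat.factorial_le hn
      exact (G.eq_bot_or_eq_top_of_card_le_two hcard).resolve_left hbot
    · have h3 : 3 ≤ ENat.card (Fin n) := by simpa using Nat.succ_le_of_lt hn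
      refine eq_top_of_forall_swap_notMem_conj_eq (ENat.exists_ne_ne_of_three_le h3) hbot
        fun a b hab g hg => ?_
      have hswap : (swap a b).IsSwap := ⟨a, b, ne_of_swap_notMem hab, rfl⟩
      by_contra hconj
      exact not_isCancellable_of_conj_ne hg hab hswap.orderOf hconj hc
  · rintro (rfl | rfl)
    exacts [isCancellable_bot, isCancellable_top]
end

section
/- Every cancellable element of a lattice is a modular element: if x ∈ L satisfies the implication (x ⊔ y = x ⊔ z and x ⊓ y = x ⊓ z imply y = z) for all y, z ∈ L, then for all y, z ∈ L with y ≤ z one has (x ⊔ y) ⊓ z = (x ⊓ z) ⊔ y. -/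
section Lattice

variable {L : Type*} [Lattice L] {x y z : L}

theorem sup_sup_inf_of_le (hyz : y ≤ z) : x ⊔ (x ⊔ y) ⊓ z = x ⊔ y :=
  le_antisymm (sup_le le_sup_left inf_le_left) (sup_le_sup_left (le_inf le_sup_right hyz) x)

theorem inf_inf_sup_of_le (hyz : y ≤ z) : x ⊓ (x ⊓ z ⊔ y) = x ⊓ z :=
  sup_sup_inf_of_le (L := Lᵒᵈ) hyz

end Lattice

theorem stmt4 {L : Type*} [Lattice L] (x : L)
    (hcanc : ∀ y z : L, x ⊔ y = x ⊔ z → x ⊓ y = x ⊓ z → y = z) :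
    ∀ y z : L, y ≤ z → (x ⊔ y) ⊓ z = (x ⊓ z) ⊔ y := by
  intro y z hyz
  -- both sides have join `x ⊔ y` and meet `x ⊓ z` with `x`
  apply hcanc
  · rw [sup_sup_inf_of_le hyz, ← sup_assoc, sup_inf_self]
  · rw [inf_inf_sup_of_le hyz, ← inf_assoc, inf_sup_self]
end

section
/- If an element x of a lattice L is both a distributive element and a modular element, then x is a standard element: if x ⊔ (y ⊓ z) = (x ⊔ y) ⊓ (x ⊔ z) for all y, z ∈ L, and (x ⊔ y) ⊓ z = (x ⊓ z) ⊔ y for all y, z ∈ L with y ≤ z, then (x ⊔ y) ⊓ z = (x ⊓ z) ⊔ (y ⊓ z) for all y, z ∈ L. -/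
theorem stmt5 {L : Type*} [Lattice L] (x : L)
    (hdistr : ∀ y z : L, x ⊔ (y ⊓ z) = (x ⊔ y) ⊓ (x ⊔ z))
    (hmod : ∀ y z : L, y ≤ z → (x ⊔ y) ⊓ z = (x ⊓ z) ⊔ y) :
    ∀ y z : L, (x ⊔ y) ⊓ z = (x ⊓ z) ⊔ (y ⊓ z) := by
  intro y z
  calc (x ⊔ y) ⊓ z = (x ⊔ y) ⊓ (x ⊔ z) ⊓ z := by
        rw [inf_assoc, inf_of_le_right (le_sup_right : z ≤ x ⊔ z)]
    _ = (x ⊔ y ⊓ z) ⊓ z := by rw [hdistr]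
    _ = (x ⊓ z) ⊔ (y ⊓ z) := hmod (y ⊓ z) z inf_le_right
end

section
/- Let F be the free semigroup over a countably infinite alphabet (say, over ℕ), and let u, v ∈ F be words with ℓ(u) = ℓ(v) and con(u) = con(v). If u ≤ v, that is, v = a·ξ(u)·b for some semigroup endomorphism ξ of F and some possibly empty words a, b, then u and v are equivalent, i.e., there exists a semigroup automorphism φ of F with φ(u) = v. (Equivalently: non-equivalent words with equal length and equal content are incomparable with respect to ≤.) -/
/-! An endomorphism `ξ` of a free semigroup never shortens a word, since every letter goes to a
nonempty word. Hence `ℓ(u) = ℓ(v)` forces `a` and `b` to be empty and `ξ` to send each letter of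
`u` to a single letter, so `v = σ(u)` for a letter map `σ`. Since `con(v) = σ(con(u)) = con(u)`
is finite, `σ` permutes `con(u)`, and any permutation of `ℕ` extending it induces the required
automorphism. -/

/-- The content of a word in the free semigroup over ℕ: the set of letters occurring in it. -/
def con (u : FreeSemigroup ℕ) : Set ℕ := {x | x = u.head ∨ x ∈ u.tail}

/-- `wordLe u v` means `v = a·ξ(u)·b` for some semigroup endomorphism `ξ` of the free
semigroup and some possibly empty words `a`, `b`. -/
def wordLe (u v : FreeSemigroup ℕ) : Prop :=
  ∃ ξ : FreeSemigroup ℕ →ₙ* FreeSemigroup ℕ,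
    v = ξ u ∨ (∃ a, v = a * ξ u) ∨ (∃ b, v = ξ u * b) ∨ (∃ a b, v = a * ξ u * b)

theorem Set.Finite.exists_perm_eqOn_of_image_eq {α : Type*} {s : Set α} (hs : s.Finite)
    {σ : α → α} (h : σ '' s = s) : ∃ π : Equiv.Perm α, Set.EqOn π σ s := by
  classical
  have hbij : Set.BijOn σ s s :=
    (hs.surjOn_iff_bijOn_of_mapsTo fun x hx => h ▸ Set.mem_image_of_mem σ hx).mp h.ge
  exact ⟨Equiv.Perm.ofSubtype (hbij.equiv σ), fun x hx => Equiv.Perm.ofSubtype_apply_of_mem _ hx⟩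

namespace FreeSemigroup

variable {α β : Type*}

theorem one_le_length (u : FreeSemigroup α) : 1 ≤ u.length := Nat.le_add_left 1 _

theorem eq_of_of_length_eq_one {w : FreeSemigroup α} (h : w.length = 1) : w = of w.head := by
  obtain ⟨x, l⟩ := w
  obtain rfl : l = [] := List.length_eq_zero_iff.mp (Nat.succ_injective h)
  rfl

theorem length_le_length_apply (ξ : FreeSemigroup α →ₙ* FreeSemigroup β) (u : FreeSemigroup α) :
    u.length ≤ (ξ u).length := by
  induction u with
  | ih1 x => exact one_le_length (ξ (of x))
  | ih2 x y _ hy =>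
    rw [map_mul, length_mul, length_mul, length_of]
    exact Nat.add_le_add (one_le_length _) hy

theorem apply_eq_map_of_length_eq (ξ : FreeSemigroup α →ₙ* FreeSemigroup β) {u : FreeSemigroup α}
    (h : (ξ u).length = u.length) : ξ u = map (fun x => (ξ (of x)).head) u := by
  induction u with
  | ih1 x => exact eq_of_of_length_eq_one (by rwa [length_of] at h)
  | ih2 x y hx hy =>
    rw [map_mul, length_mul, length_mul] at h
    have := length_le_length_apply ξ (of x)
    have := length_le_length_apply ξ y
    rw [map_mul, map_mul, hx (by omega), hy (by omega)]

def congr (e : α ≃ β) : FreeSemigroup α ≃* FreeSemigroup β where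
  toFun := map e
  invFun := map e.symm
  left_inv := DFunLike.congr_fun (hom_ext (funext fun _ => by simp) : (map e.symm).comp (map e) = .id _)
  right_inv := DFunLike.congr_fun (hom_ext (funext fun _ => by simp) : (map e).comp (map e.symm) = .id _)
  map_mul' := map_mul (map e)

theorem congr_apply (e : α ≃ β) (u : FreeSemigroup α) : congr e u = map e u := rfl

end FreeSemigroup

open FreeSemigroup

theorem con_of (x : ℕ) : con (of x) = {x} := by
  ext y
  simp [con]

theorem con_mul (u w : FreeSemigroup ℕ) : con (u * w) = con u ∪ con w := by
  ext y
  simp only [con, Set.mem_ofPred_eq, head_mul, tail_mul, List.mem_append, List.mem_cons,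
    Set.mem_union]
  tauto

theorem con_finite (u : FreeSemigroup ℕ) : (con u).Finite :=
  (List.finite_toSet (u.head :: u.tail)).subset fun x hx => by simpa [con] using hx

theorem con_map (σ : ℕ → ℕ) (u : FreeSemigroup ℕ) : con (map σ u) = σ '' con u := by
  induction u with
  | ih1 x => rw [map_of, con_of, con_of, Set.image_singleton]
  | ih2 x y hx hy => rw [map_mul, con_mul, con_mul, hx, hy, Set.image_union]

theorem map_eq_map_of_eqOn_con {σ τ : ℕ → ℕ} {u : FreeSemigroup ℕ} (h : Set.EqOn σ τ (con u)) :
    map σ u = map τ u := by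
  induction u with
  | ih1 x => rw [map_of, map_of, h (by rw [con_of]; rfl)]
  | ih2 x y hx hy =>
    rw [con_mul] at h
    rw [map_mul, map_mul, hx (h.mono Set.subset_union_left), hy (h.mono Set.subset_union_right)]

theorem exists_eq_apply_of_wordLe_of_length_eq {u v : FreeSemigroup ℕ} (hle : wordLe u v)
    (hlen : u.length = v.length) : ∃ ξ : FreeSemigroup ℕ →ₙ* FreeSemigroup ℕ, v = ξ u := by
  obtain ⟨ξ, hv⟩ := hle
  refine ⟨ξ, ?_⟩
  have := length_le_length_apply ξ u
  rcases hv with hv | ⟨a, rfl⟩ | ⟨b, rfl⟩ | ⟨a, b, rfl⟩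
  · exact hv
  all_goals simp only [length_mul] at hlen; simp only [length] at hlen this; omega

theorem stmt6 (u v : FreeSemigroup ℕ) (hlen : u.length = v.length)
    (hcon : con u = con v) (hle : wordLe u v) :
    ∃ φ : FreeSemigroup ℕ ≃* FreeSemigroup ℕ, φ u = v := by
  obtain ⟨ξ, rfl⟩ := exists_eq_apply_of_wordLe_of_length_eq hle hlen
  set σ : ℕ → ℕ := fun x => (ξ (of x)).head
  have hmap : ξ u = map σ u := apply_eq_map_of_length_eq ξ hlen.symm
  have himage : σ '' con u = con u := by rw [← con_map, ← hmap, hcon]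
  obtain ⟨π, hπ⟩ := (con_finite u).exists_perm_eqOn_of_image_eq himage
  exact ⟨congr π, by rw [congr_apply, map_eq_map_of_eqOn_con hπ, hmap]⟩
end
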